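/- arXiv:2205.09615 — 2 statements merged into one kernel-verified Lean document; each statement's English description precedes it below -/
import Mathlib

section
/- Let n ≥ 1 and let Σ be a positive definite n×n real matrix. Then the function F: ℝⁿ → ℝ defined by F(m) = ∫ over the orthant {t ∈ ℝⁿ : t_i ≥ 0 for all i} of N(t; m, Σ) dt is differentiable on all of ℝⁿ. (This is the differentiability of the stochastic model's expected accuracy with respect to the predicted mean vector.) -/
open MeasureTheory Matrix

lemma dp_bilin (n : ℕ) : IsBoundedBilinearMap ℝ
    (fun p : (Fin n → ℝ) × (Fin n → ℝ) => p.1 ⬝ᵥ p.2) where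
  add_left x₁ x₂ y := add_dotProduct x₁ x₂ y
  smul_left c x y := smul_dotProduct c x y
  add_right x y₁ y₂ := dotProduct_add x y₁ y₂
  smul_right c x y := dotProduct_smul c x y
  bound := by
    refine ⟨n + 1, by positivity, fun x y => ?_⟩
    calc ‖x ⬝ᵥ y‖ ≤ ∑ i, ‖x i * y i‖ := norm_sum_le _ _
    _ ≤ ∑ _i : Fin n, ‖x‖ * ‖y‖ := by
        refine Finset.sum_le_sum fun i _ => ?_
        rw [norm_mul]
        exact mul_le_mul (norm_le_pi_norm x i) (norm_le_pi_norm y i) (norm_nonneg _) (norm_nonneg _)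
    _ = n * ‖x‖ * ‖y‖ := by simp [mul_assoc]
    _ ≤ (n+1) * ‖x‖ * ‖y‖ := by nlinarith [norm_nonneg x, norm_nonneg y]

lemma quad_lower (n : ℕ) (hn : 1 ≤ n) (M : Matrix (Fin n) (Fin n) ℝ) (hM : M.PosDef) :
    ∃ lam > 0, ∀ x : Fin n → ℝ, lam * ‖x‖^2 ≤ x ⬝ᵥ M *ᵥ x := by
  set A : (Fin n → ℝ) →L[ℝ] (Fin n → ℝ) := LinearMap.toContinuousLinearMap M.mulVecLin
  have hA : ∀ x, A x = M *ᵥ x := fun x => rfl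
  have hq : Continuous fun x : Fin n → ℝ => x ⬝ᵥ M *ᵥ x := by
    have := ((dp_bilin n).continuous).comp (continuous_id.prodMk A.continuous)
    exact this
  haveI : Nonempty (Fin n) := ⟨⟨0, hn⟩⟩
  have hsph : (Metric.sphere (0 : Fin n → ℝ) 1).Nonempty := by
    haveI : Nontrivial (Fin n → ℝ) := Function.nontrivial
    exact NormedSpace.sphere_nonempty.2 zero_le_one
  obtain ⟨x₀, hx₀, hmin⟩ := (isCompact_sphere (0 : Fin n → ℝ) 1).exists_isMinOn hsph
    hq.continuousOn
  have hx₀norm : ‖x₀‖ = 1 := by simpa using hx₀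
  have hx₀ne : x₀ ≠ 0 := by intro h; rw [h] at hx₀norm; simp at hx₀norm
  refine ⟨x₀ ⬝ᵥ M *ᵥ x₀, by simpa using hM.dotProduct_mulVec_pos hx₀ne, fun x => ?_⟩
  rcases eq_or_ne x 0 with rfl | hx
  · simp
  · have hnx : (0:ℝ) < ‖x‖ := norm_pos_iff.2 hx
    set u : Fin n → ℝ := ‖x‖⁻¹ • x with hu
    have hunorm : ‖u‖ = 1 := by
      rw [hu, norm_smul, norm_inv, norm_norm, inv_mul_cancel₀ hnx.ne']
    have humem : u ∈ Metric.sphere (0 : Fin n → ℝ) 1 := by simpa using hunorm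
    have hle := hmin humem
    have hdecomp : x ⬝ᵥ M *ᵥ x = ‖x‖^2 * (u ⬝ᵥ M *ᵥ u) := by
      rw [hu, smul_dotProduct, mulVec_smul, dotProduct_smul]
      field_simp
      have h0 : ‖x‖ ^ 2 * ‖x‖⁻¹ ^ 2 = 1 := by rw [← mul_pow, mul_inv_cancel₀ hnx.ne', one_pow]
      linear_combination (-(x ⬝ᵥ M *ᵥ x)) * h0
    rw [hdecomp]
    calc (x₀ ⬝ᵥ M *ᵥ x₀) * ‖x‖^2 ≤ (u ⬝ᵥ M *ᵥ u) * ‖x‖^2 :=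
          mul_le_mul_of_nonneg_right hle (sq_nonneg _)
    _ = ‖x‖^2 * (u ⬝ᵥ M *ᵥ u) := mul_comm _ _

lemma master_est {lam R x u : ℝ} (hlam : 0 < lam) (hR : 0 ≤ R) (hx : 0 ≤ x) (hu : 0 ≤ u)
    (hxu : u ≤ x + R) :
    (1 + x) * Real.exp (-(lam/2) * x^2) ≤
      Real.exp ((1 + lam*R/2)^2/lam + (lam/4)*R^2) * Real.exp (-(lam/4) * u^2) := by
  have h1 : (1 + x) ≤ Real.exp x := by
    have := Real.add_one_le_exp x; linarith
  calc (1 + x) * Real.exp (-(lam/2) * x^2) ≤ Real.exp x * Real.exp (-(lam/2) * x^2) := by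
        apply mul_le_mul_of_nonneg_right h1 (Real.exp_pos _).le
  _ = Real.exp (x + -(lam/2) * x^2) := (Real.exp_add _ _).symm
  _ ≤ Real.exp ((1 + lam*R/2)^2/lam + (lam/4)*R^2 + -(lam/4) * u^2) := by
      apply Real.exp_le_exp.2
      have hu2 : u^2 ≤ (x + R)^2 := by nlinarith
      have key : x + (lam/4) * (x+R)^2 - (lam/2) * x^2 ≤ (1 + lam*R/2)^2/lam + (lam/4)*R^2 := by
        rw [← sub_nonneg]
        have h2 : (1 + lam*R/2)^2/lam = (1 + lam*R/2)^2 * lam⁻¹ := by ring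
        have h3 : lam * lam⁻¹ = 1 := mul_inv_cancel₀ hlam.ne'
        nlinarith [sq_nonneg (lam * x - (2 + lam*R)), mul_pos hlam hlam, sq_nonneg (1+lam*R/2)]
      nlinarith [hlam.le]
  _ = _ := Real.exp_add _ _

lemma gauss_int (n : ℕ) {a : ℝ} (ha : 0 < a) :
    Integrable (fun t : Fin n → ℝ => Real.exp (-a * ∑ i, t i ^ 2)) := by
  have h := (GaussianFourier.integrable_cexp_neg_mul_sum_add (b := (a:ℂ))
    (ι := Fin n) (by simpa using ha) 0).norm
  refine h.congr (Filter.Eventually.of_forall fun v => ?_)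
  have : (- (a:ℂ) * ∑ i, (v i : ℂ) ^ 2 + ∑ i : Fin n, (0 : Fin n → ℂ) i * (v i : ℂ))
      = ((-a * ∑ i, v i ^ 2 : ℝ) : ℂ) := by
    push_cast; simp
  simp only [this, Complex.norm_exp_ofReal]

/-- Multivariate normal density `N(t; m, S)` on `R^n`. -/
noncomputable def mvnPDF (n : ℕ) (m : Fin n → ℝ) (S : Matrix (Fin n) (Fin n) ℝ)
    (t : Fin n → ℝ) : ℝ :=
  (2 * Real.pi) ^ (-(n : ℝ) / 2) * S.det ^ (-(1 : ℝ) / 2) *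
    Real.exp (-(dotProduct (t - m) (S⁻¹.mulVec (t - m))) / 2)

set_option maxHeartbeats 2000000 in
/-- The expected accuracy `F(m) = ∫_(orthant) N(t; m, Σ) dt` is differentiable
in the mean vector `m` on all of `ℝⁿ`. -/
theorem differentiable_orthant_integral_mean
    (n : ℕ) (hn : 1 ≤ n) (S : Matrix (Fin n) (Fin n) ℝ) (hS : S.PosDef) :
    Differentiable ℝ
      (fun m : Fin n → ℝ =>
        ∫ t in {t : Fin n → ℝ | ∀ i, 0 ≤ t i}, mvnPDF n m S t) := by
  intro m₀
  -- setup
  obtain ⟨lam, hlam, hquad⟩ := quad_lower n hn S⁻¹ hS.inv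
  set μ : Measure (Fin n → ℝ) := volume.restrict {t : Fin n → ℝ | ∀ i, 0 ≤ t i} with hμ
  set c₀ : ℝ := (2 * Real.pi) ^ (-(n : ℝ) / 2) * S.det ^ (-(1 : ℝ) / 2) with hc₀def
  have hc₀ : 0 < c₀ := by
    apply mul_pos
    · exact Real.rpow_pos_of_pos (by positivity) _
    · exact Real.rpow_pos_of_pos hS.det_pos _
  set A : (Fin n → ℝ) →L[ℝ] (Fin n → ℝ) := LinearMap.toContinuousLinearMap S⁻¹.mulVecLin with hAdef
  have hA : ∀ x, A x = S⁻¹ *ᵥ x := fun x => rfl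
  have Bb := dp_bilin n
  set D : (Fin n → ℝ) →L[ℝ] (Fin n → ℝ) →L[ℝ] ℝ := Bb.toContinuousLinearMap with hDdef
  have hD : ∀ x y, D x y = x ⬝ᵥ y := fun x y => rfl
  set ℓ : (Fin n → ℝ) →L[ℝ] (Fin n → ℝ) →L[ℝ] ℝ :=
    ((ContinuousLinearMap.compL ℝ (Fin n → ℝ) (Fin n → ℝ) ℝ).flip A).comp D with hℓdef
  have hℓ : ∀ x v, ℓ x v = x ⬝ᵥ S⁻¹ *ᵥ v := fun x v => rfl
  have hsymm : ∀ v x : Fin n → ℝ, v ⬝ᵥ S⁻¹ *ᵥ x = x ⬝ᵥ S⁻¹ *ᵥ v := by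
    intro v x
    have ht : S⁻¹ᵀ = S⁻¹ := by
      have := hS.inv.1
      simpa [Matrix.IsHermitian, Matrix.conjTranspose_eq_transpose_of_trivial] using this
    rw [dotProduct_mulVec, ← mulVec_transpose, ht, dotProduct_comm]
  -- the pointwise derivative
  set F' : (Fin n → ℝ) → (Fin n → ℝ) → ((Fin n → ℝ) →L[ℝ] ℝ) :=
    fun m t => (mvnPDF n m S t) • (ℓ (t - m)) with hF'def
  -- mvnPDF basic facts
  have hpdf_eq : ∀ m t, mvnPDF n m S t = c₀ * Real.exp (-((t - m) ⬝ᵥ S⁻¹ *ᵥ (t - m)) / 2) :=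
    fun m t => rfl
  have hpdf_pos : ∀ m t, 0 < mvnPDF n m S t := fun m t => by
    rw [hpdf_eq]; positivity
  have hpdf_le : ∀ m t, mvnPDF n m S t ≤ c₀ * Real.exp (-(lam/2) * ‖t - m‖^2) := by
    intro m t
    rw [hpdf_eq]
    apply mul_le_mul_of_nonneg_left _ hc₀.le
    apply Real.exp_le_exp.2
    have := hquad (t - m)
    linarith
  -- constants
  set R : ℝ := ‖m₀‖ + 1 with hRdef
  have hR : 0 ≤ R := by positivity
  set K : ℝ := c₀ * (1 + ‖ℓ‖) * Real.exp ((1 + lam*R/2)^2/lam + (lam/4)*R^2) with hKdef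
  set bound : (Fin n → ℝ) → ℝ := fun t => K * Real.exp (-(lam/(4*n)) * ∑ i, t i ^ 2)
    with hbdef
  have hsum_le : ∀ t : Fin n → ℝ, (lam/(4*n)) * ∑ i, t i ^ 2 ≤ (lam/4) * ‖t‖^2 := by
    intro t
    have h1 : ∑ i, t i ^ 2 ≤ (n : ℝ) * ‖t‖^2 := by
      calc ∑ i, t i ^ 2 ≤ ∑ _i : Fin n, ‖t‖^2 := by
            refine Finset.sum_le_sum fun i _ => ?_
            have := norm_le_pi_norm t i
            have h0 : |t i| ≤ ‖t‖ := by simpa using this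
            nlinarith [abs_nonneg (t i), sq_abs (t i)]
      _ = (n : ℝ) * ‖t‖^2 := by simp
    have hn' : (0:ℝ) < n := by exact_mod_cast hn
    rw [div_mul_eq_mul_div, div_le_iff₀ (by positivity)]
    calc lam * ∑ i, t i ^ 2 ≤ lam * ((n:ℝ) * ‖t‖^2) :=
          mul_le_mul_of_nonneg_left h1 hlam.le
    _ = lam / 4 * ‖t‖ ^ 2 * (4 * ↑n) := by ring
  -- the key comparison
  have hkey : ∀ m : Fin n → ℝ, ‖m‖ ≤ R → ∀ t,
      c₀ * (1 + ‖ℓ‖) * ((1 + ‖t - m‖) * Real.exp (-(lam/2) * ‖t - m‖^2)) ≤ bound t := by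
    intro m hm t
    have hms : ‖t‖ ≤ ‖t - m‖ + R := by
      calc ‖t‖ = ‖(t - m) + m‖ := by ring_nf
      _ ≤ ‖t - m‖ + ‖m‖ := norm_add_le _ _
      _ ≤ ‖t - m‖ + R := by linarith
    have h1 := master_est hlam hR (norm_nonneg (t - m)) (norm_nonneg t) hms
    have h2 : Real.exp (-(lam/4) * ‖t‖^2) ≤ Real.exp (-(lam/(4*n)) * ∑ i, t i ^ 2) := by
      apply Real.exp_le_exp.2
      have := hsum_le t
      linarith
    have hKnn : 0 ≤ c₀ * (1 + ‖ℓ‖) := by positivity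
    calc c₀ * (1 + ‖ℓ‖) * ((1 + ‖t - m‖) * Real.exp (-(lam/2) * ‖t - m‖^2))
        ≤ c₀ * (1 + ‖ℓ‖) * (Real.exp ((1 + lam*R/2)^2/lam + (lam/4)*R^2) *
            Real.exp (-(lam/4) * ‖t‖^2)) := mul_le_mul_of_nonneg_left h1 hKnn
    _ ≤ c₀ * (1 + ‖ℓ‖) * (Real.exp ((1 + lam*R/2)^2/lam + (lam/4)*R^2) *
            Real.exp (-(lam/(4*n)) * ∑ i, t i ^ 2)) := by
          apply mul_le_mul_of_nonneg_left _ hKnn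
          exact mul_le_mul_of_nonneg_left h2 (Real.exp_pos _).le
    _ = bound t := by rw [hbdef, hKdef]; ring
  -- norm estimate for F'
  have hF'norm : ∀ m : Fin n → ℝ, ‖m‖ ≤ R → ∀ t, ‖F' m t‖ ≤ bound t := by
    intro m hm t
    refine le_trans ?_ (hkey m hm t)
    have h1 : ‖mvnPDF n m S t‖ = mvnPDF n m S t := by
      rw [Real.norm_eq_abs]; exact abs_of_pos (hpdf_pos m t)
    have h2 : ‖ℓ (t - m)‖ ≤ ‖ℓ‖ * ‖t - m‖ := ℓ.le_opNorm _
    have h3 := hpdf_le m t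
    have he : (0:ℝ) < Real.exp (-(lam/2) * ‖t - m‖^2) := Real.exp_pos _
    have hnn : 0 ≤ ‖t - m‖ := norm_nonneg _
    have hℓnn : 0 ≤ ‖ℓ‖ := ContinuousLinearMap.opNorm_nonneg _
    have hp := (hpdf_pos m t).le
    calc ‖F' m t‖ ≤ mvnPDF n m S t * ‖ℓ (t - m)‖ := by
          simp only [hF'def]
          refine le_trans (ContinuousLinearMap.opNorm_smul_le _ _) (le_of_eq ?_)
          rw [h1]
    _ ≤ (c₀ * Real.exp (-(lam/2) * ‖t - m‖^2)) * (‖ℓ‖ * ‖t - m‖) := by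
          apply mul_le_mul h3 h2 (norm_nonneg _) (by positivity)
    _ ≤ c₀ * (1 + ‖ℓ‖) * ((1 + ‖t - m‖) * Real.exp (-(lam/2) * ‖t - m‖^2)) := by
          nlinarith [he.le, hc₀.le, mul_nonneg hℓnn hnn]
  -- integrability of bound
  have hbound_int : Integrable bound μ := by
    have h := (gauss_int n (a := lam/(4*n)) (by positivity)).const_mul K
    exact (h.restrict (s := {t : Fin n → ℝ | ∀ i, 0 ≤ t i}))
  -- continuity in t
  have hqcont : Continuous fun y : Fin n → ℝ => y ⬝ᵥ S⁻¹ *ᵥ y := by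
    have := (Bb.continuous).comp (continuous_id.prodMk A.continuous)
    exact this
  have hcont : ∀ m, Continuous fun t => mvnPDF n m S t := by
    intro m
    have : Continuous fun t : Fin n → ℝ => (t - m) ⬝ᵥ S⁻¹ *ᵥ (t - m) :=
      hqcont.comp (continuous_id.sub continuous_const)
    have h2 : Continuous fun t : Fin n → ℝ =>
        c₀ * Real.exp (-((t - m) ⬝ᵥ S⁻¹ *ᵥ (t - m)) / 2) :=
      continuous_const.mul (Real.continuous_exp.comp ((this.neg).div_const 2))
    have hfun : (fun t => mvnPDF n m S t)
        = fun t : Fin n → ℝ => c₀ * Real.exp (-((t - m) ⬝ᵥ S⁻¹ *ᵥ (t - m)) / 2) :=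
      funext fun t => hpdf_eq m t
    rw [hfun]; exact h2
  have hcontF' : Continuous (F' m₀) := by
    rw [hF'def]
    exact (hcont m₀).smul (ℓ.continuous.comp (continuous_id.sub continuous_const))
  -- differentiability pointwise
  have hdiff : ∀ t, ∀ m : Fin n → ℝ, HasFDerivAt (fun m => mvnPDF n m S t) (F' m t) m := by
    intro t m
    have hsub : HasFDerivAt (fun m : Fin n → ℝ => t - m)
        (0 - ContinuousLinearMap.id ℝ (Fin n → ℝ)) m :=
      (hasFDerivAt_const t m).sub (hasFDerivAt_id m)
    have h1 : HasFDerivAt (fun y : Fin n → ℝ => (y, A y))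
        ((ContinuousLinearMap.id ℝ (Fin n → ℝ)).prod A) (t - m) :=
      HasFDerivAt.prodMk (hasFDerivAt_id _) (A.hasFDerivAt)
    have h2 : HasFDerivAt (fun y : Fin n → ℝ => y ⬝ᵥ S⁻¹ *ᵥ y)
        ((Bb.deriv (t - m, A (t - m))).comp
          ((ContinuousLinearMap.id ℝ (Fin n → ℝ)).prod A)) (t - m) :=
      by have := HasFDerivAt.comp (t - m) (Bb.hasFDerivAt ((t - m), A (t - m))) h1; exact this
    have h3 := h2.comp m hsub
    have h4 := h3.const_mul (-(1/2) : ℝ)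
    have h5 := h4.exp
    have h6 := h5.const_mul c₀
    have hfun : (fun m : Fin n → ℝ =>
        c₀ * Real.exp ((-(1/2) : ℝ) * ((t - m) ⬝ᵥ S⁻¹ *ᵥ (t - m)))) =
        fun m => mvnPDF n m S t := by
      funext m'
      rw [hpdf_eq]
      congr 1
      ring
    rw [← hfun]
    refine h6.congr_fderiv ?_
    ext v
    simp only [hF'def, ContinuousLinearMap.smul_apply, ContinuousLinearMap.comp_apply,
      ContinuousLinearMap.sub_apply, ContinuousLinearMap.zero_apply,
      ContinuousLinearMap.coe_id', id_eq, Function.comp_apply, zero_sub,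
      ContinuousLinearMap.prod_apply, IsBoundedBilinearMap.deriv_apply,
      ContinuousLinearMap.neg_apply, Matrix.mulVec_neg,
      smul_eq_mul, map_neg, hA, dotProduct_neg, neg_dotProduct, hℓ]
    rw [hpdf_eq, hsymm v (t - m)]
    ring
  -- apply differentiation under the integral sign
  have hmain := hasFDerivAt_integral_of_dominated_of_fderiv_le
    (F := fun m t => mvnPDF n m S t) (F' := F') (x₀ := m₀) (bound := bound)
    (μ := μ) (s := Metric.ball m₀ 1) (Metric.ball_mem_nhds m₀ one_pos)
    (Filter.Eventually.of_forall fun m => ((hcont m).aestronglyMeasurable).restrict)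
    ?_ ?_ ?_ hbound_int ?_
  · exact hmain.differentiableAt
  · -- Integrable (F m₀) μ
    refine (Integrable.mono hbound_int ((hcont m₀).aestronglyMeasurable.restrict)
      (Filter.Eventually.of_forall fun t => ?_))
    rw [Real.norm_eq_abs, Real.norm_eq_abs, abs_of_pos (hpdf_pos m₀ t)]
    calc mvnPDF n m₀ S t
        ≤ c₀ * (1 + ‖ℓ‖) * ((1 + ‖t - m₀‖) * Real.exp (-(lam/2) * ‖t - m₀‖^2)) := by
          refine le_trans (hpdf_le m₀ t) ?_
          have he := (Real.exp_pos (-(lam/2) * ‖t - m₀‖^2)).le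
          have hnn : 0 ≤ ‖t - m₀‖ := norm_nonneg _
          have hℓnn : 0 ≤ ‖ℓ‖ := ContinuousLinearMap.opNorm_nonneg _
          nlinarith [mul_nonneg (mul_nonneg hc₀.le he) hnn,
            mul_nonneg (mul_nonneg hc₀.le he) hℓnn,
            mul_nonneg (mul_nonneg (mul_nonneg hc₀.le he) hℓnn) hnn,
            mul_nonneg hc₀.le he]
    _ ≤ bound t := hkey m₀ (by rw [hRdef]; linarith) t
    _ ≤ |bound t| := le_abs_self _
  · exact (hcontF'.aestronglyMeasurable).restrict
  · refine Filter.Eventually.of_forall fun t => fun m hm => ?_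
    refine hF'norm m ?_ t
    have := mem_ball_iff_norm.1 hm
    calc ‖m‖ = ‖m₀ + (m - m₀)‖ := by ring_nf
    _ ≤ ‖m₀‖ + ‖m - m₀‖ := norm_add_le _ _
    _ ≤ R := by rw [hRdef]; linarith
  · exact Filter.Eventually.of_forall fun t => fun m _ => hdiff t m
end

section
/- Let L_CE: ℝ → ℝ be defined by L_CE(b) = log(1 + e^{−(1/4 + b)}) + log(1 + e^{−b}) + log(1 + e^{−(1/4 − b)}). Then the derivative of L_CE is strictly negative at every b ≤ 1/4; consequently, every global minimizer b* of L_CE satisfies b* > 1/4. In particular, since the threshold model f(x) = x − b classifies all three toy points correctly only when 0 < b < 1/4, the cross-entropy minimizer misclassifies at least one point. -/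
/-!
The loss is a sum of softplus terms `log (1 + exp (-m))` in the margins `m = 1/4 + b`, `b`,
`1/4 - b`, and the softplus has derivative `-σ (-m)` with `σ` the logistic function. Hence
`toyCE' b = σ (b - 1/4) - σ (-(1/4 + b)) - σ (-b)`. For `b ≤ 1/4` the positive term is at most
`σ 0 = 1/2`, while each negative term is at least `σ (-1/2) > 1/4` (equivalently `e^{1/2} < 3`).
A global minimizer is a critical point, so it lies to the right of `1/4`.
-/

/-- The toy-example cross-entropy loss. -/
noncomputable def toyCE (b : ℝ) : ℝ :=
  Real.log (1 + Real.exp (-(1 / 4 + b))) + Real.log (1 + Real.exp (-b)) +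
    Real.log (1 + Real.exp (-(1 / 4 - b)))

open Real

namespace Real

lemma hasDerivAt_log_one_add_exp_neg (z : ℝ) :
    HasDerivAt (fun z => log (1 + exp (-z))) (-sigmoid (-z)) z := by
  have h := (((hasDerivAt_neg z).exp).const_add 1).log (by positivity)
  convert h using 1
  rw [← sigmoid_mul_rexp_neg, sigmoid_def]
  field_simp

lemma quarter_lt_sigmoid_neg_half : 1 / 4 < sigmoid (-(1 / 2)) := by
  have h : exp (1 / 2) < 3 := calc
    exp (1 / 2) < exp 1 := exp_lt_exp.mpr (by norm_num)
    _ < 3 := by linarith [exp_one_lt_d9]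
  rw [sigmoid_def, neg_neg, lt_inv_comm₀ (by norm_num) (by positivity)]
  linarith

end Real

lemma HasDerivAt.log_one_add_exp_neg {f : ℝ → ℝ} {f' x : ℝ} (hf : HasDerivAt f f' x) :
    HasDerivAt (fun x => Real.log (1 + Real.exp (-f x))) (-(f' * sigmoid (-f x))) x :=
  ((hasDerivAt_log_one_add_exp_neg (f x)).comp x hf).congr_deriv (by ring)

lemma toyCE_hasDerivAt (b : ℝ) :
    HasDerivAt toyCE (sigmoid (-(1 / 4 - b)) - sigmoid (-(1 / 4 + b)) - sigmoid (-b)) b := by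
  have h₁ := ((hasDerivAt_id' b).const_add (1 / 4)).log_one_add_exp_neg
  have h₂ := (hasDerivAt_id' b).log_one_add_exp_neg
  have h₃ := ((hasDerivAt_id' b).const_sub (1 / 4)).log_one_add_exp_neg
  exact ((h₁.add h₂).add h₃).congr_deriv (by ring)

lemma toyCE_deriv_neg {b : ℝ} (hb : b ≤ 1 / 4) : deriv toyCE b < 0 := by
  rw [(toyCE_hasDerivAt b).deriv]
  have hpos : sigmoid (-(1 / 4 - b)) ≤ sigmoid 0 := sigmoid_le (by linarith)
  have hneg₁ : sigmoid (-(1 / 2)) ≤ sigmoid (-(1 / 4 + b)) := sigmoid_le (by linarith)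
  have hneg₂ : sigmoid (-(1 / 2)) ≤ sigmoid (-b) := sigmoid_le (by linarith)
  linarith [quarter_lt_sigmoid_neg_half, sigmoid_zero]

lemma quarter_lt_of_forall_toyCE_le {b : ℝ} (hmin : ∀ x, toyCE b ≤ toyCE x) : 1 / 4 < b := by
  by_contra! hb
  have hcrit : deriv toyCE b = 0 := IsLocalMin.deriv_eq_zero (Filter.Eventually.of_forall hmin)
  exact (toyCE_deriv_neg hb).ne hcrit

/-- The derivative of the toy cross-entropy loss is strictly negative at every
`b ≤ 1/4`; consequently every global minimizer satisfies `b > 1/4` and in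
particular lies outside the interval `(0, 1/4)` of perfect-classification
thresholds, so the cross-entropy minimizer misclassifies at least one point. -/
theorem toyCE_minimizer_gt_quarter :
    (∀ b : ℝ, b ≤ 1 / 4 → deriv toyCE b < 0) ∧
    (∀ b : ℝ, (∀ x : ℝ, toyCE b ≤ toyCE x) → 1 / 4 < b) ∧
    (∀ b : ℝ, (∀ x : ℝ, toyCE b ≤ toyCE x) → ¬(0 < b ∧ b < 1 / 4)) :=
  ⟨fun _ => toyCE_deriv_neg, fun _ => quarter_lt_of_forall_toyCE_le,
    fun _ hmin hb => (quarter_lt_of_forall_toyCE_le hmin).not_gt hb.2⟩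
end
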